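/- Let Γ : C_d → (-∞, ∞] be defined by Γ(φ) = ∫ φ dP + ∫ e^{-φ(x)} dx over ℝ^d, where C_d is the class of proper convex lower semi-continuous coercive functions, and suppose φ* minimizes Γ over C_d with Γ(φ*) finite. If φ ∈ C_d satisfies max{φ(x), φ*(x)} ≤ φ^0 for all x in dom(φ) ∩ dom(φ*), then Γ(φ) - Γ(φ*) ≥ (1/2) e^{-φ^0} ∫_{dom(φ) ∩ dom(φ*)} (φ(x) - φ*(x))^2 dx. -/

import Mathlib

/-!
For `0 < l < 1` let `ψ_l = l φ + (1 - l) φs`; it lies in `C_d` once the two domains meet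
(otherwise the integral vanishes and the claim is `Γ(φs) ≤ Γ(φ)`). The term `∫ φ dP` of `Γ` is
affine along `ψ_l`, while on the common domain, where both functions are at most `φ0`,
`t ↦ e^{-t}` is `e^{-φ0}`-strongly convex, and off it `ψ_l = ∞`. Integrating,
`Γ(ψ_l) + l (1 - l) / 2 · e^{-φ0} ∫ (φ - φs)² ≤ l Γ(φ) + (1 - l) Γ(φs)`.
Minimality gives `Γ(φs) ≤ Γ(ψ_l)`; divide by `l` and let `l → 0`.
-/

open MeasureTheory

/-- The class `C_d` of proper, convex, lower semi-continuous, coercive functions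
`ℝ^d → (-∞, ∞]`, encoded with values in `EReal`. -/
def CdE (d : ℕ) (φ : EuclideanSpace ℝ (Fin d) → EReal) : Prop :=
  LowerSemicontinuous φ ∧
  (∀ x, φ x ≠ ⊥) ∧ (∃ x, φ x ≠ ⊤) ∧
  (∀ x y : EuclideanSpace ℝ (Fin d), ∀ l : ℝ, 0 ≤ l → l ≤ 1 →
    φ (l • x + (1 - l) • y) ≤ (l : EReal) * φ x + ((1 - l : ℝ) : EReal) * φ y) ∧
  Filter.Tendsto φ (Filter.cocompact _) Filter.atTop

/-- Positive part of an extended real, as `ℝ≥0∞`. -/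
noncomputable def eposPart (y : EReal) : ENNReal :=
  if y = ⊤ then ⊤ else ENNReal.ofReal y.toReal

/-- Extended-real-valued integral of an `EReal`-valued function. -/
noncomputable def eIntegral {α : Type*} [MeasurableSpace α] (μ : Measure α)
    (f : α → EReal) : EReal :=
  ((∫⁻ x, eposPart (f x) ∂μ : ENNReal) : EReal) -
    ((∫⁻ x, eposPart (-(f x)) ∂μ : ENNReal) : EReal)

/-- `e^{-y}`, with `e^{-∞} = 0`. -/
noncomputable def negExpE (y : EReal) : ℝ :=
  if y = ⊤ then 0 else Real.exp (-(y.toReal))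

/-- The objective `Γ(φ) = ∫ φ dP + ∫ e^{-φ(x)} dx`. -/
noncomputable def GammaLC (d : ℕ) (P : Measure (EuclideanSpace ℝ (Fin d)))
    (φ : EuclideanSpace ℝ (Fin d) → EReal) : EReal :=
  eIntegral P φ +
    ((∫⁻ x, ENNReal.ofReal (negExpE (φ x)) ∂(volume : Measure (EuclideanSpace ℝ (Fin d)))
      : ENNReal) : EReal)

open Set Filter Topology

theorem strongConvexOn_exp_neg_Iic (c : ℝ) :
    StrongConvexOn (Iic c) (Real.exp (-c)) fun t => Real.exp (-t) := by
  rw [strongConvexOn_iff_convex]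
  simp only [Real.norm_eq_abs, sq_abs]
  have hexp (t : ℝ) : HasDerivAt (fun t => Real.exp (-t)) (-Real.exp (-t)) t := by
    simpa using (hasDerivAt_neg t).exp
  refine convexOn_of_hasDerivWithinAt2_nonneg (convex_Iic c)
    (f' := fun t => -Real.exp (-t) - Real.exp (-c) * t)
    (f'' := fun t => Real.exp (-t) - Real.exp (-c)) ?_ (fun t _ => ?_) (fun t _ => ?_)
    (fun t ht => ?_)
  · fun_prop
  · exact ((hexp t).sub ((hasDerivAt_pow 2 t).const_mul _)).hasDerivWithinAt.congr_deriv
      (by ring)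
  · exact ((hexp t).neg.sub ((hasDerivAt_id t).const_mul _)).hasDerivWithinAt.congr_deriv
      (by simp)
  · rw [interior_Iic] at ht
    simpa using ht.out.le

lemma EReal.coe_mul_ne_bot {r : ℝ} (hr : 0 ≤ r) {a : EReal} (ha : a ≠ ⊥) :
    (r : EReal) * a ≠ ⊥ :=
  (EReal.mul_ne_bot _ _).2
    ⟨.inl (EReal.coe_ne_bot r), .inr ha, .inl (EReal.coe_ne_top r), .inl (EReal.coe_nonneg.2 hr)⟩

-- Written as in the convexity clause of `CdE`, which thus reads
-- `φ (l • x + (1 - l) • y) ≤ convexCombE l (φ x) (φ y)`.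
noncomputable def convexCombE (l : ℝ) (a b : EReal) : EReal :=
  (l : EReal) * a + ((1 - l : ℝ) : EReal) * b

section convexCombE

variable {l : ℝ} {a b : EReal}

@[simp]
lemma convexCombE_coe (l a b : ℝ) :
    convexCombE l a b = ((l * a + (1 - l) * b : ℝ) : EReal) := by
  simp [convexCombE, EReal.coe_add, EReal.coe_mul]

lemma convexCombE_ne_bot (hl0 : 0 ≤ l) (hl1 : l ≤ 1) (ha : a ≠ ⊥) (hb : b ≠ ⊥) :
    convexCombE l a b ≠ ⊥ := by
  rw [convexCombE, Ne, EReal.add_eq_bot_iff, not_or]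
  exact ⟨EReal.coe_mul_ne_bot hl0 ha, EReal.coe_mul_ne_bot (sub_nonneg.2 hl1) hb⟩

lemma convexCombE_eq_top (hl0 : 0 < l) (hl1 : l < 1) (ha : a ≠ ⊥) (hb : b ≠ ⊥)
    (h : a = ⊤ ∨ b = ⊤) : convexCombE l a b = ⊤ := by
  have hl1' : 0 < 1 - l := sub_pos.2 hl1
  rcases h with rfl | rfl
  · rw [convexCombE, EReal.coe_mul_top_of_pos hl0,
      EReal.top_add_of_ne_bot (EReal.coe_mul_ne_bot hl1'.le hb)]
  · rw [convexCombE, EReal.coe_mul_top_of_pos hl1',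
      EReal.add_top_of_ne_bot (EReal.coe_mul_ne_bot hl0.le ha)]

lemma convexCombE_mono (hl0 : 0 ≤ l) (hl1 : l ≤ 1) {a' b' : EReal} (ha : a ≤ a')
    (hb : b ≤ b') : convexCombE l a b ≤ convexCombE l a' b' :=
  add_le_add (mul_le_mul_of_nonneg_left ha (EReal.coe_nonneg.2 hl0))
    (mul_le_mul_of_nonneg_left hb (EReal.coe_nonneg.2 (sub_nonneg.2 hl1)))

lemma convexCombE_convexCombE_comm {t : ℝ} (hl0 : 0 ≤ l) (hl1 : l ≤ 1) (ht0 : 0 ≤ t)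
    (ht1 : t ≤ 1) (a b c e : EReal) :
    convexCombE l (convexCombE t a b) (convexCombE t c e) =
      convexCombE t (convexCombE l a c) (convexCombE l b e) := by
  have distrib {r : ℝ} (hr : 0 ≤ r) (x y : EReal) := EReal.left_distrib_of_nonneg_of_ne_top
    (EReal.coe_nonneg.2 hr) (EReal.coe_ne_top r) x y
  simp only [convexCombE, distrib hl0, distrib (sub_nonneg.2 hl1), distrib ht0,
    distrib (sub_nonneg.2 ht1), ← mul_assoc, ← EReal.coe_mul, mul_comm l, mul_comm (1 - l)]
  abel

end convexCombE

lemma LowerSemicontinuous.coe_mul {α : Type*} [TopologicalSpace α] {f : α → EReal}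
    (hf : LowerSemicontinuous f) {r : ℝ} (hr : 0 ≤ r) :
    LowerSemicontinuous fun x => (r : EReal) * f x := by
  rcases hr.eq_or_lt with rfl | hr
  · simpa using lowerSemicontinuous_const
  have hr0 : (r : EReal) ≠ 0 := by exact_mod_cast hr.ne'
  have hcont : Continuous fun y : EReal => (r : EReal) * y :=
    continuous_iff_continuousAt.2 fun y => (EReal.continuousAt_mul (.inl hr0) (.inl hr0)
      (.inl (EReal.coe_ne_bot r)) (.inl (EReal.coe_ne_top r))).comp
        (continuous_const.prodMk continuous_id).continuousAt
  exact hcont.comp_lowerSemicontinuous hf fun _ _ h =>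
    mul_le_mul_of_nonneg_left h (EReal.coe_nonneg.2 hr.le)

lemma LowerSemicontinuous.exists_coe_le_of_tendsto_cocompact {X : Type*} [TopologicalSpace X]
    {f : X → EReal} (hf : LowerSemicontinuous f) (hbot : ∀ x, f x ≠ ⊥)
    (hcoer : Tendsto f (cocompact X) atTop) : ∃ m : ℝ, ∀ x, (m : EReal) ≤ f x := by
  obtain ⟨K, hK, hKf⟩ := hasBasis_cocompact.eventually_iff.1 (hcoer.eventually_ge_atTop 0)
  rcases K.eq_empty_or_nonempty with rfl | hne
  · exact ⟨0, fun x => hKf (notMem_empty x)⟩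
  obtain ⟨a, -, ha⟩ := (hf.lowerSemicontinuousOn K).exists_isMinOn hne hK
  obtain ⟨m, -, hm⟩ := EReal.lt_iff_exists_real_btwn.1 (hbot a).bot_lt
  refine ⟨min m 0, fun x => ?_⟩
  by_cases hx : x ∈ K
  · exact (EReal.coe_le_coe_iff.2 (min_le_left m 0)).trans (hm.le.trans (ha hx))
  · exact (EReal.coe_le_coe_iff.2 (min_le_right m 0)).trans (hKf hx)

section CdE

variable {d : ℕ} {φ ψ : EuclideanSpace ℝ (Fin d) → EReal}

lemma CdE.exists_coe_le (hφ : CdE d φ) : ∃ m : ℝ, ∀ x, (m : EReal) ≤ φ x :=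
  hφ.1.exists_coe_le_of_tendsto_cocompact hφ.2.1 hφ.2.2.2.2

lemma CdE.convexComb (hφ : CdE d φ) (hψ : CdE d ψ) {l : ℝ} (hl0 : 0 < l) (hl1 : l < 1)
    (hdom : ∃ x, φ x ≠ ⊤ ∧ ψ x ≠ ⊤) : CdE d fun x => convexCombE l (φ x) (ψ x) := by
  obtain ⟨hφlsc, hφbot, -, hφconv, hφcoer⟩ := hφ
  obtain ⟨hψlsc, hψbot, -, hψconv, hψcoer⟩ := hψ
  have hl1' : 0 ≤ 1 - l := by linarith
  refine ⟨?_, fun x => convexCombE_ne_bot hl0.le hl1.le (hφbot x) (hψbot x), ?_,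
    fun x y t ht0 ht1 => ?_, ?_⟩
  · exact (hφlsc.coe_mul hl0.le).add' (hψlsc.coe_mul hl1') fun x => EReal.continuousAt_add
      (.inr (EReal.coe_mul_ne_bot hl1' (hψbot x))) (.inl (EReal.coe_mul_ne_bot hl0.le (hφbot x)))
  · obtain ⟨x, hφx, hψx⟩ := hdom
    refine ⟨x, show convexCombE l (φ x) (ψ x) ≠ ⊤ from ?_⟩
    rw [← EReal.coe_toReal hφx (hφbot x), ← EReal.coe_toReal hψx (hψbot x), convexCombE_coe]
    exact EReal.coe_ne_top _
  · calc convexCombE l (φ (t • x + (1 - t) • y)) (ψ (t • x + (1 - t) • y))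
        ≤ convexCombE l (convexCombE t (φ x) (φ y)) (convexCombE t (ψ x) (ψ y)) :=
          convexCombE_mono hl0.le hl1.le (hφconv x y t ht0 ht1) (hψconv x y t ht0 ht1)
      _ = convexCombE t (convexCombE l (φ x) (ψ x)) (convexCombE l (φ y) (ψ y)) :=
          convexCombE_convexCombE_comm hl0.le hl1.le ht0 ht1 _ _ _ _
  · have htop {f : EuclideanSpace ℝ (Fin d) → EReal} (hf : Tendsto f (cocompact _) atTop) :
        ∀ᶠ x in cocompact _, f x = ⊤ :=
      (hf.eventually_ge_atTop ⊤).mono fun _ => top_le_iff.1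
    refine tendsto_atTop.2 fun b => ((htop hφcoer).and (htop hψcoer)).mono fun x hx => ?_
    rw [convexCombE_eq_top hl0 hl1 (hφbot x) (hψbot x) (.inl hx.1)]
    exact le_top

end CdE

lemma measurable_eposPart : Measurable eposPart :=
  Measurable.ite (measurableSet_singleton ⊤) measurable_const
    (ENNReal.measurable_ofReal.comp measurable_ereal_toReal)

lemma eposPart_coe (r : ℝ) : eposPart r = ENNReal.ofReal r := by
  simp [eposPart]

lemma EReal.toReal_eq_toReal_eposPart_sub (y : EReal) :
    y.toReal = (eposPart y).toReal - (eposPart (-y)).toReal := by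
  induction y with
  | bot => simp [eposPart]
  | top => simp [eposPart]
  | coe r => simp [eposPart_coe, ← EReal.coe_neg, ENNReal.toReal_ofReal']

section eIntegral

variable {α : Type*} [MeasurableSpace α] {μ : Measure α} {f g : α → EReal}

lemma eIntegral_congr_ae (h : f =ᵐ[μ] g) : eIntegral μ f = eIntegral μ g := by
  have hpos : ∫⁻ x, eposPart (f x) ∂μ = ∫⁻ x, eposPart (g x) ∂μ :=
    lintegral_congr_ae (h.mono fun x hx => by simp only [hx])
  have hneg : ∫⁻ x, eposPart (-f x) ∂μ = ∫⁻ x, eposPart (-g x) ∂μ :=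
    lintegral_congr_ae (h.mono fun x hx => by simp only [hx])
  rw [eIntegral, eIntegral, hpos, hneg]

lemma eIntegral_coe {u : α → ℝ} (hu : Integrable u μ) :
    eIntegral μ (fun x => (u x : EReal)) = ((∫ x, u x ∂μ : ℝ) : EReal) := by
  have hneg (x : α) : eposPart (-(u x : EReal)) = ENNReal.ofReal (-u x) := by
    rw [← EReal.coe_neg, eposPart_coe]
  have hneg_fin : ∫⁻ x, ENNReal.ofReal (-u x) ∂μ ≠ ⊤ := hu.neg.lintegral_lt_top.ne
  simp only [eIntegral, eposPart_coe, hneg,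
    integral_eq_lintegral_pos_part_sub_lintegral_neg_part hu, EReal.coe_sub,
    EReal.coe_ennreal_toReal hu.lintegral_lt_top.ne, EReal.coe_ennreal_toReal hneg_fin]

lemma eIntegral_convexCombE (hf : ∀ᵐ x ∂μ, f x ≠ ⊤) (hg : ∀ᵐ x ∂μ, g x ≠ ⊤)
    (hfb : ∀ x, f x ≠ ⊥) (hgb : ∀ x, g x ≠ ⊥) (hfi : Integrable (fun x => (f x).toReal) μ)
    (hgi : Integrable (fun x => (g x).toReal) μ) (l : ℝ) :
    eIntegral μ (fun x => convexCombE l (f x) (g x)) =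
      ((l * ∫ x, (f x).toReal ∂μ + (1 - l) * ∫ x, (g x).toReal ∂μ : ℝ) : EReal) := by
  have hcoe : (fun x => convexCombE l (f x) (g x)) =ᵐ[μ]
      fun x => (((l * (f x).toReal + (1 - l) * (g x).toReal) : ℝ) : EReal) := by
    filter_upwards [hf, hg] with x hfx hgx
    rw [← convexCombE_coe, EReal.coe_toReal hfx (hfb x), EReal.coe_toReal hgx (hgb x)]
  have hint : Integrable (fun x => l * (f x).toReal + (1 - l) * (g x).toReal) μ :=
    (hfi.const_mul l).add (hgi.const_mul (1 - l))
  rw [eIntegral_congr_ae hcoe, eIntegral_coe hint,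
    integral_add (hfi.const_mul l) (hgi.const_mul (1 - l)), integral_const_mul,
    integral_const_mul]

lemma ae_ne_top_of_lintegral_eposPart_ne_top (hg : Measurable g)
    (hpos : ∫⁻ x, eposPart (g x) ∂μ ≠ ⊤) : ∀ᵐ x ∂μ, g x ≠ ⊤ := by
  filter_upwards [ae_lt_top (measurable_eposPart.comp hg) hpos] with x hx htop
  simp [htop, eposPart] at hx

lemma integrable_toReal_of_lintegral_eposPart_ne_top (hg : Measurable g)
    (hpos : ∫⁻ x, eposPart (g x) ∂μ ≠ ⊤) (hneg : ∫⁻ x, eposPart (-g x) ∂μ ≠ ⊤) :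
    Integrable (fun x => (g x).toReal) μ := by
  simp only [EReal.toReal_eq_toReal_eposPart_sub]
  exact (integrable_toReal_of_lintegral_ne_top (measurable_eposPart.comp hg).aemeasurable
    hpos).sub (integrable_toReal_of_lintegral_ne_top
      (measurable_eposPart.comp hg.neg).aemeasurable hneg)

lemma eIntegral_ne_bot (hneg : ∫⁻ x, eposPart (-g x) ∂μ ≠ ⊤) : eIntegral μ g ≠ ⊥ := by
  rw [eIntegral, sub_eq_add_neg, Ne, EReal.add_eq_bot_iff, not_or, EReal.neg_eq_bot_iff,
    EReal.coe_ennreal_eq_top_iff]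
  exact ⟨EReal.coe_ennreal_ne_bot _, hneg⟩

lemma lintegral_eposPart_ne_top_of_eIntegral_ne_top (hneg : ∫⁻ x, eposPart (-g x) ∂μ ≠ ⊤)
    (h : eIntegral μ g ≠ ⊤) : ∫⁻ x, eposPart (g x) ∂μ ≠ ⊤ := by
  intro hpos
  rw [eIntegral, hpos, ← EReal.coe_ennreal_toReal hneg, EReal.coe_ennreal_top,
    EReal.top_sub_coe] at h
  exact h rfl

lemma lintegral_eposPart_neg_ne_top [IsFiniteMeasure μ] {m : ℝ} (hm : ∀ x, (m : EReal) ≤ g x) :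
    ∫⁻ x, eposPart (-g x) ∂μ ≠ ⊤ := by
  refine ne_top_of_le_ne_top (lintegral_const (ENNReal.ofReal (-m)) ▸
    ENNReal.mul_ne_top ENNReal.ofReal_ne_top (measure_ne_top μ _)) (lintegral_mono fun x => ?_)
  have hx : -g x ≤ (-m : ℝ) := by rw [EReal.coe_neg]; exact EReal.neg_le_neg_iff.2 (hm x)
  induction h : -g x with
  | bot => simp [eposPart]
  | top => simp [h] at hx
  | coe r =>
    rw [h] at hx
    rw [eposPart_coe]
    exact ENNReal.ofReal_le_ofReal (EReal.coe_le_coe_iff.1 hx)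

end eIntegral

noncomputable def negExpMass {α : Type*} [MeasurableSpace α] (μ : Measure α) (f : α → EReal) :
    ENNReal :=
  ∫⁻ x, ENNReal.ofReal (negExpE (f x)) ∂μ

lemma measurable_negExpE : Measurable negExpE :=
  Measurable.ite (measurableSet_singleton ⊤) measurable_const measurable_ereal_toReal.neg.exp

lemma ofReal_negExpE_convexCombE_add_le {a b : EReal} (ha : a ≠ ⊥) (hb : b ≠ ⊥) {c l : ℝ}
    (hl0 : 0 < l) (hl1 : l < 1) (hc : a ≠ ⊤ → b ≠ ⊤ → a ≤ c ∧ b ≤ c) :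
    ENNReal.ofReal (negExpE (convexCombE l a b)) +
        (if a ≠ ⊤ ∧ b ≠ ⊤ then ENNReal.ofReal (l * (1 - l) / 2 * Real.exp (-c)) *
          ENNReal.ofReal ((a.toReal - b.toReal) ^ 2) else 0) ≤
      ENNReal.ofReal l * ENNReal.ofReal (negExpE a) +
        ENNReal.ofReal (1 - l) * ENNReal.ofReal (negExpE b) := by
  split_ifs with hfin
  · obtain ⟨hac, hbc⟩ := hc hfin.1 hfin.2
    lift a to ℝ using ⟨hfin.1, ha⟩
    lift b to ℝ using ⟨hfin.2, hb⟩
    have key := (strongConvexOn_exp_neg_Iic c).2 (EReal.coe_le_coe_iff.1 hac)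
      (EReal.coe_le_coe_iff.1 hbc) hl0.le (sub_nonneg.2 hl1.le) (by ring)
    simp only [smul_eq_mul, Real.norm_eq_abs, sq_abs] at key
    simp only [convexCombE_coe, negExpE, EReal.coe_ne_top, if_false, EReal.toReal_coe]
    rw [← ENNReal.ofReal_mul (by positivity), ← ENNReal.ofReal_mul hl0.le,
      ← ENNReal.ofReal_mul (sub_nonneg.2 hl1.le), ← ENNReal.ofReal_add (by positivity)
      (by positivity), ← ENNReal.ofReal_add (by positivity) (by positivity)]
    exact ENNReal.ofReal_le_ofReal (by linarith)
  · rw [convexCombE_eq_top hl0 hl1 ha hb (by tauto)]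
    simp [negExpE]

lemma negExpMass_convexCombE_add_le {α : Type*} [MeasurableSpace α] {μ : Measure α}
    {f g : α → EReal} (hf : Measurable f) (hg : Measurable g) (hfb : ∀ x, f x ≠ ⊥)
    (hgb : ∀ x, g x ≠ ⊥) {c l : ℝ} (hl0 : 0 < l) (hl1 : l < 1)
    (hc : ∀ x, f x ≠ ⊤ → g x ≠ ⊤ → f x ≤ c ∧ g x ≤ c) :
    negExpMass μ (fun x => convexCombE l (f x) (g x)) +
        ENNReal.ofReal (l * (1 - l) / 2 * Real.exp (-c)) *
          ∫⁻ x in {x | f x ≠ ⊤ ∧ g x ≠ ⊤}, ENNReal.ofReal (((f x).toReal - (g x).toReal) ^ 2) ∂μ ≤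
      ENNReal.ofReal l * negExpMass μ f + ENNReal.ofReal (1 - l) * negExpMass μ g := by
  set S := {x | f x ≠ ⊤ ∧ g x ≠ ⊤}
  set q := fun x => ENNReal.ofReal (l * (1 - l) / 2 * Real.exp (-c)) *
    ENNReal.ofReal (((f x).toReal - (g x).toReal) ^ 2)
  have hS : MeasurableSet S :=
    (hf (measurableSet_singleton ⊤).compl).inter (hg (measurableSet_singleton ⊤).compl)
  have hfexp : Measurable fun x => ENNReal.ofReal (negExpE (f x)) :=
    (measurable_negExpE.comp hf).ennreal_ofReal
  calc _ = negExpMass μ (fun x => convexCombE l (f x) (g x)) + ∫⁻ x, S.indicator q x ∂μ := by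
        rw [lintegral_indicator hS, lintegral_const_mul' _ _ ENNReal.ofReal_ne_top]
    _ ≤ ∫⁻ x, ENNReal.ofReal (negExpE (convexCombE l (f x) (g x))) + S.indicator q x ∂μ :=
        le_lintegral_add _ _
    _ ≤ ∫⁻ x, ENNReal.ofReal l * ENNReal.ofReal (negExpE (f x)) +
          ENNReal.ofReal (1 - l) * ENNReal.ofReal (negExpE (g x)) ∂μ :=
        lintegral_mono fun x => by
          simpa only [Set.indicator_apply, Set.mem_ofPred_eq, S, q] using
            ofReal_negExpE_convexCombE_add_le (hfb x) (hgb x) hl0 hl1 (hc x)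
    _ = _ := by
        rw [lintegral_add_left (hfexp.const_mul _),
          lintegral_const_mul' _ _ ENNReal.ofReal_ne_top,
          lintegral_const_mul' _ _ ENNReal.ofReal_ne_top]
        rfl

section GammaLC

variable {d : ℕ} {P : Measure (EuclideanSpace ℝ (Fin d))}
  {φ ψ : EuclideanSpace ℝ (Fin d) → EReal}

lemma GammaLC_eq_eIntegral_add (φ : EuclideanSpace ℝ (Fin d) → EReal) :
    GammaLC d P φ = eIntegral P φ + negExpMass volume φ :=
  rfl

variable [IsFiniteMeasure P]

lemma GammaLC_ne_bot (hφ : CdE d φ) : GammaLC d P φ ≠ ⊥ := by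
  obtain ⟨m, hm⟩ := hφ.exists_coe_le
  rw [GammaLC_eq_eIntegral_add, Ne, EReal.add_eq_bot_iff, not_or]
  exact ⟨eIntegral_ne_bot (lintegral_eposPart_neg_ne_top hm), EReal.coe_ennreal_ne_bot _⟩

lemma GammaLC_eq_coe_of_ne_top (hφ : CdE d φ) (h : GammaLC d P φ ≠ ⊤) :
    (∀ᵐ x ∂P, φ x ≠ ⊤) ∧ Integrable (fun x => (φ x).toReal) P ∧ negExpMass volume φ ≠ ⊤ ∧
      GammaLC d P φ = ((∫ x, (φ x).toReal ∂P + (negExpMass volume φ).toReal : ℝ) : EReal) := by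
  obtain ⟨m, hm⟩ := hφ.exists_coe_le
  have hmeas : Measurable φ := hφ.1.measurable
  have hneg := lintegral_eposPart_neg_ne_top (μ := P) hm
  obtain ⟨hE, hJ⟩ := (EReal.add_ne_top_iff_ne_top₂ (eIntegral_ne_bot hneg)
    (EReal.coe_ennreal_ne_bot _)).1 h
  have hpos := lintegral_eposPart_ne_top_of_eIntegral_ne_top hneg hE
  have hae := ae_ne_top_of_lintegral_eposPart_ne_top hmeas hpos
  have hint := integrable_toReal_of_lintegral_eposPart_ne_top hmeas hpos hneg
  have hJ' : negExpMass volume φ ≠ ⊤ := mt EReal.coe_ennreal_eq_top_iff.2 hJ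
  refine ⟨hae, hint, hJ', ?_⟩
  rw [GammaLC_eq_eIntegral_add, EReal.coe_add, EReal.coe_ennreal_toReal hJ',
    ← eIntegral_coe hint]
  exact congrArg (· + _) (eIntegral_congr_ae (hae.mono fun x hx =>
    (EReal.coe_toReal hx (hφ.2.1 x)).symm))

theorem GammaLC_convexCombE_add_le (hφ : CdE d φ) (hψ : CdE d ψ) {c l : ℝ} (hl0 : 0 < l)
    (hl1 : l < 1) (hc : ∀ x, φ x ≠ ⊤ → ψ x ≠ ⊤ → φ x ≤ c ∧ ψ x ≤ c) :
    GammaLC d P (fun x => convexCombE l (φ x) (ψ x)) +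
        ((l * (1 - l) / 2 * Real.exp (-c) : ℝ) : EReal) *
          ((∫⁻ x in {x | φ x ≠ ⊤ ∧ ψ x ≠ ⊤}, ENNReal.ofReal (((φ x).toReal - (ψ x).toReal) ^ 2)
            : ENNReal) : EReal) ≤
      convexCombE l (GammaLC d P φ) (GammaLC d P ψ) := by
  by_cases hfin : GammaLC d P φ ≠ ⊤ ∧ GammaLC d P ψ ≠ ⊤
  swap
  · rw [convexCombE_eq_top hl0 hl1 (GammaLC_ne_bot hφ) (GammaLC_ne_bot hψ) (by tauto)]
    exact le_top
  obtain ⟨hφae, hφi, hJφ, hΓφ⟩ := GammaLC_eq_coe_of_ne_top hφ hfin.1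
  obtain ⟨hψae, hψi, hJψ, hΓψ⟩ := GammaLC_eq_coe_of_ne_top hψ hfin.2
  set χ := fun x => convexCombE l (φ x) (ψ x)
  set I := ∫⁻ x in {x | φ x ≠ ⊤ ∧ ψ x ≠ ⊤}, ENNReal.ofReal (((φ x).toReal - (ψ x).toReal) ^ 2)
  set K := l * (1 - l) / 2 * Real.exp (-c)
  have hK : 0 < K := by positivity
  have hexp : negExpMass volume χ + ENNReal.ofReal K * I ≤
      ENNReal.ofReal l * negExpMass volume φ + ENNReal.ofReal (1 - l) * negExpMass volume ψ :=
    negExpMass_convexCombE_add_le hφ.1.measurable hψ.1.measurable hφ.2.1 hψ.2.1 hl0 hl1 hc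
  have hRHS : ENNReal.ofReal l * negExpMass volume φ +
      ENNReal.ofReal (1 - l) * negExpMass volume ψ ≠ ⊤ := by finiteness
  have hJχ : negExpMass volume χ ≠ ⊤ := ne_top_of_le_ne_top hRHS (le_self_add.trans hexp)
  have hKI : ENNReal.ofReal K * I ≠ ⊤ := ne_top_of_le_ne_top hRHS (le_add_self.trans hexp)
  have hI : I ≠ ⊤ := fun hI =>
    hKI (ENNReal.mul_eq_top.2 (.inl ⟨(ENNReal.ofReal_pos.2 hK).ne', hI⟩))
  have hreal := ENNReal.toReal_mono hRHS hexp
  rw [ENNReal.toReal_add hJχ hKI, ENNReal.toReal_add (by finiteness) (by finiteness),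
    ENNReal.toReal_mul, ENNReal.toReal_mul, ENNReal.toReal_mul, ENNReal.toReal_ofReal hK.le,
    ENNReal.toReal_ofReal hl0.le, ENNReal.toReal_ofReal (sub_nonneg.2 hl1.le)] at hreal
  rw [GammaLC_eq_eIntegral_add, eIntegral_convexCombE hφae hψae hφ.2.1 hψ.2.1 hφi hψi, hΓφ,
    hΓψ, convexCombE_coe, ← EReal.coe_ennreal_toReal hJχ, ← EReal.coe_ennreal_toReal hI,
    ← EReal.coe_add, ← EReal.coe_mul, ← EReal.coe_add, EReal.coe_le_coe_iff]
  linarith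

end GammaLC

lemma le_of_forall_one_sub_mul_le {x y : ℝ} (h : ∀ l ∈ Ioo (0 : ℝ) 1, (1 - l) * x ≤ y) :
    x ≤ y := by
  have hlim : Tendsto (fun l : ℝ => (1 - l) * x) (𝓝[>] 0) (𝓝 x) := by
    have hcont : Continuous fun l : ℝ => (1 - l) * x := by fun_prop
    simpa using (hcont.tendsto 0).mono_left nhdsWithin_le_nhds
  exact le_of_tendsto hlim (eventually_of_mem (Ioo_mem_nhdsGT one_pos) h)

lemma coe_mul_le_of_forall_mul_one_sub_mul_le {k D : ℝ} (hk : 0 < k) {I : ENNReal}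
    (h : ∀ l ∈ Ioo (0 : ℝ) 1, ((l * ((1 - l) * k) : ℝ) : EReal) * I ≤ ((l * D : ℝ) : EReal)) :
    (k : EReal) * I ≤ D := by
  have hI : I ≠ ⊤ := fun hI => by
    have h := h (1 / 2) ⟨by norm_num, by norm_num⟩
    rw [hI, EReal.coe_ennreal_top, EReal.coe_mul_top_of_pos (by positivity), top_le_iff] at h
    exact EReal.coe_ne_top _ h
  rw [← EReal.coe_ennreal_toReal hI, ← EReal.coe_mul, EReal.coe_le_coe_iff]
  refine le_of_forall_one_sub_mul_le fun l hl => le_of_mul_le_mul_left ?_ hl.1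
  have h := h l hl
  rw [← EReal.coe_ennreal_toReal hI, ← EReal.coe_mul, EReal.coe_le_coe_iff] at h
  linarith

theorem Gamma_error_lower_bound_general (d : ℕ) (P : Measure (EuclideanSpace ℝ (Fin d)))
    [IsProbabilityMeasure P]
    (φs : EuclideanSpace ℝ (Fin d) → EReal) (hφs : CdE d φs)
    (hmin : ∀ ψ, CdE d ψ → GammaLC d P φs ≤ GammaLC d P ψ)
    (hfin : ∃ r : ℝ, GammaLC d P φs = (r : EReal))
    (φ : EuclideanSpace ℝ (Fin d) → EReal) (hφ : CdE d φ) (φ0 : ℝ)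
    (hbd : ∀ x, φ x ≠ ⊤ → φs x ≠ ⊤ → φ x ≤ (φ0 : EReal) ∧ φs x ≤ (φ0 : EReal)) :
    ((1 / 2 * Real.exp (-φ0) : ℝ) : EReal) *
        ((∫⁻ x in {x | φ x ≠ ⊤ ∧ φs x ≠ ⊤},
            ENNReal.ofReal (((φ x).toReal - (φs x).toReal) ^ 2)
            ∂(volume : Measure (EuclideanSpace ℝ (Fin d))) : ENNReal) : EReal) ≤
      GammaLC d P φ - GammaLC d P φs := by
  obtain ⟨γ, hγ⟩ := hfin
  rcases eq_or_ne (GammaLC d P φ) ⊤ with htop | hne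
  · rw [htop, hγ, EReal.top_sub_coe]
    exact le_top
  obtain ⟨a, ha⟩ : ∃ a : ℝ, GammaLC d P φ = a :=
    ⟨_, (EReal.coe_toReal hne (GammaLC_ne_bot hφ)).symm⟩
  rw [ha, hγ, ← EReal.coe_sub]
  by_cases hdom : ∃ x, φ x ≠ ⊤ ∧ φs x ≠ ⊤
  · refine coe_mul_le_of_forall_mul_one_sub_mul_le (by positivity) fun l hl => ?_
    have h := (add_le_add_left (hmin _ (hφ.convexComb hφs hl.1 hl.2 hdom)) _).trans
      (GammaLC_convexCombE_add_le hφ hφs hl.1 hl.2 hbd)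
    rw [ha, hγ, convexCombE_coe, add_comm, ← EReal.le_sub_iff_add_le (.inl (EReal.coe_ne_bot _))
      (.inl (EReal.coe_ne_top _)), ← EReal.coe_sub] at h
    convert h using 3 <;> ring
  · have hγa : γ ≤ a := by simpa [ha, hγ] using hmin φ hφ
    simp only [not_exists.1 hdom, ofPred_false, Measure.restrict_empty, lintegral_zero_measure,
      EReal.coe_ennreal_zero, mul_zero]
    exact EReal.coe_nonneg.2 (sub_nonneg.2 hγa)

theorem Gamma_error_lower_bound (d : ℕ) (P : Measure (EuclideanSpace ℝ (Fin d)))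
    [IsProbabilityMeasure P]
    (hmom : ∫⁻ x, ENNReal.ofReal ‖x‖ ∂P ≠ ⊤)
    (hhyp : ∀ (v : EuclideanSpace ℝ (Fin d)) (r : ℝ), v ≠ 0 →
      P {x | (inner ℝ v x : ℝ) = r} < 1)
    (φs : EuclideanSpace ℝ (Fin d) → EReal) (hφs : CdE d φs)
    (hmin : ∀ ψ, CdE d ψ → GammaLC d P φs ≤ GammaLC d P ψ)
    (hfin : ∃ r : ℝ, GammaLC d P φs = (r : EReal))
    (φ : EuclideanSpace ℝ (Fin d) → EReal) (hφ : CdE d φ) (φ0 : ℝ)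
    (hbd : ∀ x, φ x ≠ ⊤ → φs x ≠ ⊤ → φ x ≤ (φ0 : EReal) ∧ φs x ≤ (φ0 : EReal)) :
    ((1 / 2 * Real.exp (-φ0) : ℝ) : EReal) *
        ((∫⁻ x in {x | φ x ≠ ⊤ ∧ φs x ≠ ⊤},
            ENNReal.ofReal (((φ x).toReal - (φs x).toReal) ^ 2)
            ∂(volume : Measure (EuclideanSpace ℝ (Fin d))) : ENNReal) : EReal) ≤
      GammaLC d P φ - GammaLC d P φs :=
  Gamma_error_lower_bound_general d P φs hφs hmin hfin φ hφ φ0 hbd
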